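/- Let W be a module of level 1 over H_I such that each p_i acts locally finitely and W is restricted. For a finitely supported μ : I → ℂ, define W_μ = {w ∈ W : (p_i − μ_i)^r w = 0 for each i and some r depending on i}. Then each W_μ is an H_I-submodule of W and W = ⊕_μ W_μ. -/

import Mathlib

/-!
A locally finite operator `T` splits every vector of a `T`-stable subspace `S` into
generalized eigenvectors lying in `S`: pass to a finite-dimensional `T`-stable subspace of `S`
and use that `ℂ` is algebraically closed. As the `p_i` commute, the conditions "generalized
eigenvector of `p_i`" for `i ≠ a` cut out `p_a`-stable subspaces, so the eigenvalues of the
finitely many `p_i` that do not kill `w` can be fixed one index at a time; every other `p_i`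
kills `w`, i.e. has eigenvalue `0` on it. The `W_μ` are stable under `q_i` because
`(p_i - μ)^(r+1) q_i = q_i (p_i - μ)^(r+1) + (r+1) (p_i - μ)^r`, and the sum is direct since
simultaneous generalized eigenspaces of commuting operators are independent.
-/

/-- A level-one module for the Heisenberg Lie algebra `H_I` with basis
`{p_i, q_i, k | i ∈ I}`, relations `[p_i, q_j] = δ_{ij} k`, all other brackets zero,
where the central element `k` acts as the identity (level `1`). -/
structure HeisenbergRep (I : Type) (W : Type) [AddCommGroup W] [Module ℂ W] where
  p : I → Module.End ℂ W
  q : I → Module.End ℂ W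
  comm_pp : ∀ i j, Commute (p i) (p j)
  comm_qq : ∀ i j, Commute (q i) (q j)
  comm_pq_same : ∀ i, p i * q i - q i * p i = 1
  comm_pq_ne : ∀ i j, i ≠ j → Commute (p i) (q j)

namespace HeisenbergRep

variable {I : Type} {W : Type} [AddCommGroup W] [Module ℂ W]

/-- A submodule stable under all the Heisenberg operators. -/
def Stable (ρ : HeisenbergRep I W) (S : Submodule ℂ W) : Prop :=
  (∀ i, ∀ w ∈ S, ρ.p i w ∈ S) ∧ (∀ i, ∀ w ∈ S, ρ.q i w ∈ S)

/-- `S` is a nonzero stable submodule with no proper nonzero stable submodule. -/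
def IsSimpleSub (ρ : HeisenbergRep I W) (S : Submodule ℂ W) : Prop :=
  ρ.Stable S ∧ S ≠ ⊥ ∧ ∀ T : Submodule ℂ W, ρ.Stable T → T ≤ S → T = ⊥ ∨ T = S

/-- Irreducibility of the representation. -/
def IsIrreducible (ρ : HeisenbergRep I W) : Prop := ρ.IsSimpleSub ⊤

end HeisenbergRep

/-- An endomorphism is locally finite if every vector lies in a
finitely generated (equivalently, finite-dimensional) stable subspace. -/
def Module.End.LocallyFinite {W : Type} [AddCommGroup W] [Module ℂ W]
    (T : Module.End ℂ W) : Prop :=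
  ∀ w : W, ∃ S : Submodule ℂ W, w ∈ S ∧ S.FG ∧ ∀ v ∈ S, T v ∈ S

/-- An endomorphism is locally nilpotent if every vector is killed by some power of it. -/
def Module.End.LocallyNilpotent {W : Type} [AddCommGroup W] [Module ℂ W]
    (T : Module.End ℂ W) : Prop :=
  ∀ w : W, ∃ n : ℕ, (T ^ n) w = 0

/-- Restricted: for each vector `w`, `p_i w = 0` for all but finitely many `i`. -/
def HeisenbergRep.Restricted {I W : Type} [AddCommGroup W] [Module ℂ W]
    (ρ : HeisenbergRep I W) : Prop :=
  ∀ w : W, {i : I | ρ.p i w ≠ 0}.Finite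

theorem pow_succ_mul_eq_of_commute_lie {R : Type*} [Ring R] {a b : R} (h : Commute a ⁅a, b⁆)
    (n : ℕ) : a ^ (n + 1) * b = b * a ^ (n + 1) + (n + 1) • (⁅a, b⁆ * a ^ n) := by
  have hab : a * b = b * a + ⁅a, b⁆ := by rw [Ring.lie_def]; abel
  induction n with
  | zero => simp [hab]
  | succ n ih =>
    calc a ^ (n + 2) * b = a * (a ^ (n + 1) * b) := by rw [pow_succ' a (n + 1), mul_assoc]
      _ = (b * a + ⁅a, b⁆) * a ^ (n + 1) + (n + 1) • (a * ⁅a, b⁆ * a ^ n) := by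
        rw [ih, mul_add, ← mul_assoc, hab, mul_smul_comm, ← mul_assoc]
      _ = b * a ^ (n + 2) + (n + 2) • (⁅a, b⁆ * a ^ (n + 1)) := by
        rw [h.eq, mul_assoc _ a, ← pow_succ', add_mul, mul_assoc, ← pow_succ']
        module

namespace Module.End

theorem mapsTo_maxGenEigenspace_of_commute_lie {R M : Type*} [CommRing R] [AddCommGroup M]
    [Module R M] {f g : End R M} (h : Commute f ⁅f, g⁆) (μ : R) :
    Set.MapsTo g (f.maxGenEigenspace μ) (f.maxGenEigenspace μ) := by
  intro x hx
  obtain ⟨k, hk⟩ := (mem_maxGenEigenspace f μ x).mp hx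
  have hlie : ⁅f - μ • 1, g⁆ = ⁅f, g⁆ := by
    simp only [Ring.lie_def, sub_mul, mul_sub, smul_mul_assoc, mul_smul_comm, one_mul, mul_one]
    abel
  have hcomm : Commute (f - μ • 1) ⁅f - μ • 1, g⁆ :=
    hlie ▸ h.sub_left ((Commute.one_left _).smul_left μ)
  refine (mem_maxGenEigenspace f μ (g x)).mpr ⟨k + 1, ?_⟩
  rw [← mul_apply, pow_succ_mul_eq_of_commute_lie hcomm, LinearMap.add_apply, mul_apply,
    pow_succ', mul_apply, hk, map_zero, map_zero, LinearMap.smul_apply, mul_apply, hk, map_zero,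
    smul_zero, add_zero]

end Module.End

namespace Module.End.LocallyFinite

variable {W : Type} [AddCommGroup W] [Module ℂ W]

theorem le_iSup_inf_maxGenEigenspace {T : End ℂ W} (hT : T.LocallyFinite) {S : Submodule ℂ W}
    (hS : ∀ v ∈ S, T v ∈ S) : S ≤ ⨆ μ, S ⊓ T.maxGenEigenspace μ := by
  intro w hwS
  obtain ⟨S₀, hwS₀, hS₀fg, hS₀⟩ := hT w
  let P := S ⊓ S₀
  have hP : ∀ v ∈ P, T v ∈ P := fun v hv => ⟨hS v hv.1, hS₀ v hv.2⟩
  have : Module.Finite ℂ S₀ := Module.Finite.iff_fg.mpr hS₀fg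
  have : FiniteDimensional ℂ P := Submodule.finiteDimensional_of_le inf_le_right
  have hwP : w ∈ ⨆ μ, P ⊓ T.maxGenEigenspace μ := by
    simp_rw [Submodule.inf_genEigenspace T P hP, ← Submodule.map_iSup,
      iSup_maxGenEigenspace_eq_top, Submodule.map_top, Submodule.range_subtype]
    exact ⟨hwS, hwS₀⟩
  exact iSup_mono (fun μ => inf_le_inf_right _ (inf_le_left : P ≤ S)) hwP

end Module.End.LocallyFinite

namespace Module.End

variable {ι W : Type} [AddCommGroup W] [Module ℂ W] {T : ι → End ℂ W}

theorem iInf_notMem_maxGenEigenspace_le_iSup_iInf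
    (hcomm : Pairwise fun i j => Commute (T i) (T j)) (hfin : ∀ i, (T i).LocallyFinite)
    (J : Finset ι) (μ : ι →₀ ℂ) :
    ⨅ (i) (_ : i ∉ J), (T i).maxGenEigenspace (μ i) ≤
      ⨆ ν : ι →₀ ℂ, ⨅ i, (T i).maxGenEigenspace (ν i) := by
  classical
  induction J using Finset.induction_on generalizing μ with
  | empty =>
    exact (iInf_mono fun i => iInf_le _ (Finset.notMem_empty i)).trans (le_iSup_of_le μ le_rfl)
  | insert a J _ ih =>
    set S := ⨅ (i) (_ : i ∉ insert a J), (T i).maxGenEigenspace (μ i)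
    have hS : ∀ v ∈ S, T a v ∈ S := by
      simp only [S, Submodule.mem_iInf]
      intro v hv i hi
      have hia : i ≠ a := fun h => hi (h ▸ Finset.mem_insert_self a J)
      exact mapsTo_maxGenEigenspace_of_comm (hcomm hia) _ (hv i hi)
    refine ((hfin a).le_iSup_inf_maxGenEigenspace hS).trans
      (iSup_le fun c => le_trans (le_iInf₂ fun i hi => ?_) (ih (μ.update a c)))
    rcases eq_or_ne i a with rfl | hia
    · simp
    · simpa [hia] using inf_le_left.trans (iInf₂_le i (by simp [hi, hia]))

theorem iSup_iInf_maxGenEigenspace_eq_top_of_locallyFinite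
    (hcomm : Pairwise fun i j => Commute (T i) (T j)) (hfin : ∀ i, (T i).LocallyFinite)
    (hres : ∀ w, {i | T i w ≠ 0}.Finite) :
    ⨆ ν : ι →₀ ℂ, ⨅ i, (T i).maxGenEigenspace (ν i) = ⊤ := by
  refine eq_top_iff.mpr fun w _ =>
    iInf_notMem_maxGenEigenspace_le_iSup_iInf hcomm hfin (hres w).toFinset 0 ?_
  simp only [Submodule.mem_iInf, Set.Finite.mem_toFinset, Set.mem_ofPred_eq, not_not]
  exact fun i hi => (mem_maxGenEigenspace _ _ _).mpr ⟨1, by simpa using hi⟩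

end Module.End

namespace HeisenbergRep

variable {I W : Type} [AddCommGroup W] [Module ℂ W] (ρ : HeisenbergRep I W)

theorem mapsTo_q_maxGenEigenspace_p (i j : I) (c : ℂ) :
    Set.MapsTo (ρ.q j) ((ρ.p i).maxGenEigenspace c) ((ρ.p i).maxGenEigenspace c) := by
  rcases eq_or_ne i j with rfl | hij
  · have hlie : ⁅ρ.p i, ρ.q i⁆ = 1 := (Ring.lie_def _ _).trans (ρ.comm_pq_same i)
    exact Module.End.mapsTo_maxGenEigenspace_of_commute_lie (hlie ▸ Commute.one_right _) c
  · exact Module.End.mapsTo_maxGenEigenspace_of_comm (ρ.comm_pq_ne i j hij) c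

theorem stable_iInf_maxGenEigenspace_p (μ : I → ℂ) :
    ρ.Stable (⨅ i, (ρ.p i).maxGenEigenspace (μ i)) := by
  simp only [Stable, Submodule.mem_iInf]
  exact ⟨fun j w hw i => Module.End.mapsTo_maxGenEigenspace_of_comm (ρ.comm_pp i j) _ (hw i),
    fun j w hw i => ρ.mapsTo_q_maxGenEigenspace_p i j _ (hw i)⟩

end HeisenbergRep

/-- For a restricted level-one `H_I`-module on which each `p_i` acts locally finitely,
the generalized simultaneous eigenspaces `W_μ = {w | (p_i − μ_i)^r w = 0 for each i and
some r}` (for finitely supported `μ`) are `H_I`-submodules and `W = ⊕_μ W_μ`. -/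
theorem generalized_eigenspace_decomposition
    {I W : Type} [DecidableEq (I →₀ ℂ)] [AddCommGroup W] [Module ℂ W]
    (ρ : HeisenbergRep I W) (hres : ρ.Restricted)
    (hfin : ∀ i, (ρ.p i).LocallyFinite) :
    ∃ f : (I →₀ ℂ) → Submodule ℂ W,
      (∀ mu : I →₀ ℂ, (f mu : Set W) =
        {w : W | ∀ i, ∃ r : ℕ, ((ρ.p i - mu i • 1) ^ r) w = 0}) ∧
      (∀ mu, ρ.Stable (f mu)) ∧
      DirectSum.IsInternal f := by
  refine ⟨fun μ => ⨅ i, (ρ.p i).maxGenEigenspace (μ i), fun μ => ?_,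
    fun μ => ρ.stable_iInf_maxGenEigenspace_p μ, ?_⟩
  · ext w
    simp
  · rw [DirectSum.isInternal_submodule_iff_iSupIndep_and_iSup_eq_top]
    refine ⟨?_, Module.End.iSup_iInf_maxGenEigenspace_eq_top_of_locallyFinite
      (fun i j _ => ρ.comm_pp i j) hfin hres⟩
    exact (Module.End.independent_iInf_maxGenEigenspace_of_forall_mapsTo ρ.p
      fun i j => Module.End.mapsTo_maxGenEigenspace_of_comm (ρ.comm_pp j i)).comp
      DFunLike.coe_injective
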